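/- There is an isomorphism of graded rings ℤ[y₁,y₂] ≅ ℤ[x₂,x₃][t]/(t³ - t·x₂ - x₃), where deg yᵢ = i, deg xᵢ = i, deg t = 1, given by t ↦ y₁, x₂ ↦ y₁² - y₂, x₃ ↦ y₁y₂. -/
import Mathlib

open MvPolynomial

/-- The relation ideal `(t³ - t·x₂ - x₃)` in `ℤ[x₂,x₃][t]`, where `x₂, x₃` are the
variables of `MvPolynomial (Fin 2) ℤ`. -/
noncomputable def relIdeal : Ideal (Polynomial (MvPolynomial (Fin 2) ℤ)) :=
  Ideal.span {Polynomial.X ^ 3 - Polynomial.X * Polynomial.C (X 0) - Polynomial.C (X 1)}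

noncomputable def phi : MvPolynomial (Fin 2) ℤ →+* MvPolynomial (Fin 2) ℤ :=
  (aeval ![(X 0 : MvPolynomial (Fin 2) ℤ) ^ 2 - X 1, X 0 * X 1]).toRingHom

noncomputable def fwd : Polynomial (MvPolynomial (Fin 2) ℤ) →+* MvPolynomial (Fin 2) ℤ :=
  Polynomial.eval₂RingHom phi (X 0)

noncomputable def bwd : MvPolynomial (Fin 2) ℤ →+* (Polynomial (MvPolynomial (Fin 2) ℤ) ⧸ relIdeal) :=
  (aeval ![Ideal.Quotient.mk relIdeal Polynomial.X,
    (Ideal.Quotient.mk relIdeal Polynomial.X) ^ 2 -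
      Ideal.Quotient.mk relIdeal (Polynomial.C (X 0))]).toRingHom

lemma fwd_rel : fwd (Polynomial.X ^ 3 - Polynomial.X * Polynomial.C (X 0) - Polynomial.C (X 1)) = 0 := by
  simp [fwd, phi]
  ring

noncomputable def Fwd : (Polynomial (MvPolynomial (Fin 2) ℤ) ⧸ relIdeal) →+* MvPolynomial (Fin 2) ℤ :=
  Ideal.Quotient.lift relIdeal fwd (by
    intro a ha
    rw [relIdeal, Ideal.mem_span_singleton] at ha
    obtain ⟨c, rfl⟩ := ha
    rw [map_mul, fwd_rel, zero_mul])

lemma rel_zero : Ideal.Quotient.mk relIdeal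
    (Polynomial.X ^ 3 - Polynomial.X * Polynomial.C (X 0) - Polynomial.C (X 1)) = 0 := by
  rw [Ideal.Quotient.eq_zero_iff_mem, relIdeal]
  exact Ideal.subset_span rfl

/-- Ring isomorphism `ℤ[y₁,y₂] ≅ ℤ[x₂,x₃][t]/(t³ - t·x₂ - x₃)` given by
`t ↦ y₁`, `x₂ ↦ y₁² - y₂`, `x₃ ↦ y₁y₂`. -/
theorem BGL2_iso_BSL3_adj_t :
    ∃ e : (Polynomial (MvPolynomial (Fin 2) ℤ) ⧸ relIdeal) ≃+* MvPolynomial (Fin 2) ℤ,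
      e (Ideal.Quotient.mk relIdeal Polynomial.X) = X 0 ∧
      e (Ideal.Quotient.mk relIdeal (Polynomial.C (X 0))) = (X 0) ^ 2 - X 1 ∧
      e (Ideal.Quotient.mk relIdeal (Polynomial.C (X 1))) = X 0 * X 1 := by
  have h1 : Fwd.comp bwd = RingHom.id _ := by
    apply MvPolynomial.ringHom_ext'
    · exact Subsingleton.elim _ _
    · intro i
      fin_cases i <;>
        simp [bwd, Fwd, fwd, phi]
  have h2 : bwd.comp Fwd = RingHom.id _ := by
    apply Ideal.Quotient.ringHom_ext
    apply Polynomial.ringHom_ext'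
    · apply MvPolynomial.ringHom_ext'
      · exact Subsingleton.elim _ _
      · intro i
        fin_cases i
        · simp [bwd, Fwd, fwd, phi]
        · simp [bwd, Fwd, fwd, phi]
          have := rel_zero
          rw [map_sub, map_sub, map_mul, map_pow, sub_sub, sub_eq_zero] at this
          linear_combination this
    · simp [bwd, Fwd, fwd, phi]
  refine ⟨RingEquiv.ofRingHom Fwd bwd h1 h2, ?_, ?_, ?_⟩ <;>
    simp [RingEquiv.ofRingHom, Fwd, fwd, phi]
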